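/- arXiv:0705.0606 — 5 statements merged into one kernel-verified Lean document; each statement's English description precedes it below -/
import Mathlib

section
/- Let x₁, …, x_k be unit vectors in ℝ^d, let λ₁, …, λ_k ≥ 0 be such that ∑_{i=1}^k λᵢ xᵢ is also a unit vector, and let y ∈ ℝ^d satisfy ‖y − xᵢ‖ ≤ 1 for all i = 1, …, k. Then ‖y − ∑_{i=1}^k λᵢ xᵢ‖ ≤ 1. -/
/-! The condition `‖y - x‖ ≤ ‖x‖` says exactly that `x` lies in the half-space
`‖y‖² ≤ 2⟪y, x⟫`. Such a half-space is closed under nonnegative combinations of total weight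
at least `1`, and for unit vectors `xᵢ` with `‖∑ λᵢ xᵢ‖ = 1` the triangle inequality gives
`∑ λᵢ ≥ 1`. -/

open Finset RealInnerProductSpace

section

variable {ι E : Type*} [NormedAddCommGroup E] [InnerProductSpace ℝ E]

theorem norm_sub_le_norm_iff_sq_le_two_inner (x y : E) :
    ‖y - x‖ ≤ ‖x‖ ↔ ‖y‖ ^ 2 ≤ 2 * ⟪y, x⟫ := by
  rw [← sq_le_sq₀ (norm_nonneg _) (norm_nonneg _), norm_sub_sq_real]
  constructor <;> intro h <;> linarith

theorem norm_sub_sum_smul_le_norm_sum_smul (s : Finset ι) (l : ι → ℝ) (x : ι → E) (y : E)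
    (hl : ∀ i ∈ s, 0 ≤ l i) (hl_one : 1 ≤ ∑ i ∈ s, l i) (hy : ∀ i ∈ s, ‖y - x i‖ ≤ ‖x i‖) :
    ‖y - ∑ i ∈ s, l i • x i‖ ≤ ‖∑ i ∈ s, l i • x i‖ := by
  rw [norm_sub_le_norm_iff_sq_le_two_inner, inner_sum, mul_sum]
  calc ‖y‖ ^ 2 ≤ (∑ i ∈ s, l i) * ‖y‖ ^ 2 := le_mul_of_one_le_left (by positivity) hl_one
    _ = ∑ i ∈ s, l i * ‖y‖ ^ 2 := sum_mul _ _ _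
    _ ≤ ∑ i ∈ s, 2 * ⟪y, l i • x i⟫ := sum_le_sum fun i hi => by
        rw [real_inner_smul_right, mul_left_comm]
        exact mul_le_mul_of_nonneg_left
          ((norm_sub_le_norm_iff_sq_le_two_inner _ _).1 (hy i hi)) (hl i hi)

theorem norm_sum_smul_le_sum_of_norm_eq_one (s : Finset ι) (l : ι → ℝ) (x : ι → E)
    (hl : ∀ i ∈ s, 0 ≤ l i) (hx : ∀ i ∈ s, ‖x i‖ = 1) :
    ‖∑ i ∈ s, l i • x i‖ ≤ ∑ i ∈ s, l i :=
  (norm_sum_le _ _).trans_eq <| sum_congr rfl fun i hi => by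
    rw [norm_smul, hx i hi, mul_one, Real.norm_of_nonneg (hl i hi)]

end

/-- If `x₁, …, x_k` are unit vectors in `ℝ^d`, `λᵢ ≥ 0` are such that `∑ λᵢ xᵢ` is a unit
vector, and `y` satisfies `‖y − xᵢ‖ ≤ 1` for all `i`, then `‖y − ∑ λᵢ xᵢ‖ ≤ 1`. -/
theorem norm_sub_combination_le_one {d k : ℕ}
    (x : Fin k → EuclideanSpace ℝ (Fin d)) (l : Fin k → ℝ)
    (hx : ∀ i, ‖x i‖ = 1) (hl : ∀ i, 0 ≤ l i)
    (hsum : ‖∑ i, l i • x i‖ = 1)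
    (y : EuclideanSpace ℝ (Fin d)) (hy : ∀ i, ‖y - x i‖ ≤ 1) :
    ‖y - ∑ i, l i • x i‖ ≤ 1 := by
  have hl_one : 1 ≤ ∑ i, l i :=
    hsum ▸ norm_sum_smul_le_sum_of_norm_eq_one _ l x (fun i _ => hl i) (fun i _ => hx i)
  have hy' : ∀ i ∈ univ, ‖y - x i‖ ≤ ‖x i‖ := fun i _ => (hx i).symm ▸ hy i
  exact hsum ▸ norm_sub_sum_smul_le_norm_sum_smul _ l x y (fun i _ => hl i) hl_one hy'
end

section
/- Let x, y ∈ ℝ^d. Let x₁, …, x_k and y₁, …, y_m be unit vectors such that ‖x + xᵢ − y‖ ≤ 1 for all i and ‖x − y − y_j‖ ≤ 1 for all j. Suppose there exist λ₁, …, λ_k ≥ 0 and μ₁, …, μ_m ≥ 0 such that ∑_i λᵢ xᵢ = ∑_j μ_j y_j and this common vector is a unit vector. Then x = y. -/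
/-!
Put `w = x - y` and let `v` be the common unit vector. Expanding `‖w + xᵢ‖² ≤ 1` gives
`⟪w, xᵢ⟫ ≤ -‖w‖²/2`, and summing over a nonnegative combination of unit vectors yields
`⟪w, v⟫ ≤ -‖w‖²/2 · ‖v‖`. The same argument for `-w` and the `y_j` gives
`⟪w, v⟫ ≥ ‖w‖²/2 · ‖v‖`, so `‖w‖² ≤ 0`.
-/

open Finset RealInnerProductSpace

variable {E : Type*} [NormedAddCommGroup E] [InnerProductSpace ℝ E]

theorem real_inner_le_neg_half_sq_of_norm_add_le_one {w u : E} (hu : 1 ≤ ‖u‖)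
    (h : ‖w + u‖ ≤ 1) : ⟪w, u⟫ ≤ -(‖w‖ ^ 2 / 2) := by
  have hsq : ‖w + u‖ ^ 2 ≤ 1 := pow_le_one₀ (norm_nonneg _) h
  rw [norm_add_sq_real] at hsq
  nlinarith

theorem real_inner_sum_smul_le_neg_mul_norm {ι : Type*} {s : Finset ι} {l : ι → ℝ}
    {u : ι → E} {w : E} {a : ℝ} (hl : ∀ i ∈ s, 0 ≤ l i) (hu : ∀ i ∈ s, ‖u i‖ ≤ 1)
    (ha : 0 ≤ a) (h : ∀ i ∈ s, ⟪w, u i⟫ ≤ -a) :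
    ⟪w, ∑ i ∈ s, l i • u i⟫ ≤ -(a * ‖∑ i ∈ s, l i • u i‖) := by
  have hnorm : ‖∑ i ∈ s, l i • u i‖ ≤ ∑ i ∈ s, l i :=
    (norm_sum_le _ _).trans <| sum_le_sum fun i hi => by
      rw [norm_smul, Real.norm_of_nonneg (hl i hi)]
      exact mul_le_of_le_one_right (hl i hi) (hu i hi)
  calc ⟪w, ∑ i ∈ s, l i • u i⟫ = ∑ i ∈ s, l i * ⟪w, u i⟫ := by
        simp only [inner_sum, real_inner_smul_right]
    _ ≤ ∑ i ∈ s, l i * -a :=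
        sum_le_sum fun i hi => mul_le_mul_of_nonneg_left (h i hi) (hl i hi)
    _ = -(a * ∑ i ∈ s, l i) := by rw [← sum_mul]; ring
    _ ≤ -(a * ‖∑ i ∈ s, l i • u i‖) := by gcongr

/-- If `x₁, …, x_k` and `y₁, …, y_m` are unit vectors with `‖x + xᵢ − y‖ ≤ 1` for all `i`
and `‖x − y − y_j‖ ≤ 1` for all `j`, and some nonnegative combinations
`∑ λᵢ xᵢ = ∑ μ_j y_j` form a common unit vector, then `x = y`. -/
theorem cones_disjoint {d k m : ℕ} (x y : EuclideanSpace ℝ (Fin d))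
    (xv : Fin k → EuclideanSpace ℝ (Fin d)) (yv : Fin m → EuclideanSpace ℝ (Fin d))
    (hxv : ∀ i, ‖xv i‖ = 1) (hyv : ∀ j, ‖yv j‖ = 1)
    (hx : ∀ i, ‖x + xv i - y‖ ≤ 1) (hy : ∀ j, ‖x - y - yv j‖ ≤ 1)
    (l : Fin k → ℝ) (mu : Fin m → ℝ)
    (hl : ∀ i, 0 ≤ l i) (hmu : ∀ j, 0 ≤ mu j)
    (heq : ∑ i, l i • xv i = ∑ j, mu j • yv j)
    (hunit : ‖∑ i, l i • xv i‖ = 1) :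
    x = y := by
  have hupper : ⟪x - y, ∑ i, l i • xv i⟫ ≤ -(‖x - y‖ ^ 2 / 2) := by
    have := real_inner_sum_smul_le_neg_mul_norm (s := univ) (w := x - y) (fun i _ => hl i)
      (fun i _ => (hxv i).le) (by positivity) fun i _ =>
        real_inner_le_neg_half_sq_of_norm_add_le_one (hxv i).ge
          (by rw [sub_add_eq_add_sub]; exact hx i)
    rwa [hunit, mul_one] at this
  have hlower : ⟪y - x, ∑ i, l i • xv i⟫ ≤ -(‖y - x‖ ^ 2 / 2) := by
    have := real_inner_sum_smul_le_neg_mul_norm (s := univ) (w := y - x) (fun j _ => hmu j)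
      (fun j _ => (hyv j).le) (by positivity) fun j _ =>
        real_inner_le_neg_half_sq_of_norm_add_le_one (hyv j).ge
          (by rw [show y - x + yv j = -(x - y - yv j) by abel, norm_neg]; exact hy j)
    rw [← heq] at this
    rwa [hunit, mul_one] at this
  rw [← neg_sub, inner_neg_left, norm_neg] at hlower
  have hsq : ‖x - y‖ ^ 2 = 0 := le_antisymm (by linarith) (by positivity)
  exact sub_eq_zero.mp (norm_eq_zero.mp (pow_eq_zero_iff two_ne_zero |>.mp hsq))
end

section
/- Let x, y ∈ ℝ^d with x ≠ y and ‖x − y‖ ≤ 1. Let x₁, …, x_k and y₁, …, y_m be unit vectors such that ‖x + xᵢ − y − y_j‖ ≤ 1 for all i and all j. Suppose there exist λ₁, …, λ_k ≥ 0 and μ₁, …, μ_m ≥ 0 such that ∑_i λᵢ xᵢ = −∑_j μ_j y_j and this common vector u = ∑_i λᵢ xᵢ is a unit vector. Then ∑_i λᵢ xᵢ = y − x; in particular ‖x − y‖ = 1. -/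
/-!
Write `w = x - y`, `t = ‖w‖`, `L = ∑ λᵢ`, `M = ∑ μⱼ` and `u = ∑ λᵢ xᵢ = -∑ μⱼ yⱼ`; the triangle
inequality gives `L, M ≥ 1`. Averaging `‖w + xᵢ - yⱼ‖² ≤ 1` with the weights `λᵢ μⱼ` and using
`‖xᵢ‖ = ‖yⱼ‖ = ‖u‖ = 1` yields
`(L - 1)(M - 1)(1 + t²) + (1 - t²) + (L + M) ‖w + u‖² ≤ 0`.
All three terms are nonnegative because `t ≤ 1`, so `u = -w = y - x`.
-/

open scoped RealInnerProductSpace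

section WeightedSums

variable {E : Type*} [NormedAddCommGroup E] [InnerProductSpace ℝ E] {ι : Type*} [Fintype ι]

theorem norm_sum_smul_le_sum {p : ι → ℝ} {z : ι → E} (hp : ∀ i, 0 ≤ p i)
    (hz : ∀ i, ‖z i‖ ≤ 1) : ‖∑ i, p i • z i‖ ≤ ∑ i, p i :=
  (norm_sum_le _ _).trans <| Finset.sum_le_sum fun i _ => by
    simpa [norm_smul, abs_of_nonneg (hp i)] using mul_le_of_le_one_right (hp i) (hz i)

theorem sum_mul_norm_sub_sq_of_norm_eq_one {p : ι → ℝ} {z : ι → E} (hz : ∀ i, ‖z i‖ = 1)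
    (c : E) :
    ∑ i, p i * ‖z i - c‖ ^ 2 = (∑ i, p i) * (1 + ‖c‖ ^ 2) - 2 * ⟪∑ i, p i • z i, c⟫ := by
  simp only [norm_sub_sq_real, hz, sum_inner, real_inner_smul_left, Finset.sum_mul,
    Finset.mul_sum, ← Finset.sum_sub_distrib]
  exact Finset.sum_congr rfl fun i _ => by ring

theorem sum_sum_mul_norm_add_sub_sq {κ : Type*} [Fintype κ] {xv : ι → E} {yv : κ → E}
    (hxv : ∀ i, ‖xv i‖ = 1) (hyv : ∀ j, ‖yv j‖ = 1) {l : ι → ℝ} {mu : κ → ℝ}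
    (heq : ∑ i, l i • xv i = -∑ j, mu j • yv j) (w : E) :
    ∑ i, ∑ j, l i * mu j * ‖w + xv i - yv j‖ ^ 2 =
      (∑ i, l i) * (∑ j, mu j) * (2 + ‖w‖ ^ 2)
        + 2 * ((∑ i, l i) + ∑ j, mu j) * ⟪∑ i, l i • xv i, w⟫
        + 2 * ‖∑ i, l i • xv i‖ ^ 2 := by
  set u := ∑ i, l i • xv i
  have hv : ∑ j, mu j • yv j = -u := by rw [heq, neg_neg]
  have hrow : ∀ i, ∑ j, mu j * ‖w + xv i - yv j‖ ^ 2
      = (∑ j, mu j) * (1 + ‖xv i - -w‖ ^ 2) + 2 * ⟪u, w⟫ + 2 * ⟪u, xv i⟫ := by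
    intro i
    simp_rw [norm_sub_rev (w + xv i), sum_mul_norm_sub_sq_of_norm_eq_one hyv, hv,
      sub_neg_eq_add, add_comm (xv i) w, inner_neg_left, inner_add_right]
    ring
  have hnorm : ∑ i, l i * ‖xv i - -w‖ ^ 2 = (∑ i, l i) * (1 + ‖w‖ ^ 2) + 2 * ⟪u, w⟫ := by
    rw [sum_mul_norm_sub_sq_of_norm_eq_one hxv, norm_neg, inner_neg_right]
    ring
  have hself : ∑ i, l i * ⟪u, xv i⟫ = ‖u‖ ^ 2 := by
    simp_rw [← real_inner_self_eq_norm_sq, ← real_inner_smul_right, ← inner_sum, u]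
  simp_rw [mul_assoc, ← Finset.mul_sum, hrow, mul_add, Finset.sum_add_distrib,
    mul_left_comm (l _), ← Finset.mul_sum, ← Finset.sum_mul, mul_one, hnorm, hself]
  ring

end WeightedSums

theorem cone_meets_antipodal_cone_general {d k m : ℕ} (x y : EuclideanSpace ℝ (Fin d))
    (hdist : ‖x - y‖ ≤ 1)
    (xv : Fin k → EuclideanSpace ℝ (Fin d)) (yv : Fin m → EuclideanSpace ℝ (Fin d))
    (hxv : ∀ i, ‖xv i‖ = 1) (hyv : ∀ j, ‖yv j‖ = 1)
    (hb : ∀ i, ∀ j, ‖x + xv i - y - yv j‖ ≤ 1)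
    (l : Fin k → ℝ) (mu : Fin m → ℝ)
    (hl : ∀ i, 0 ≤ l i) (hmu : ∀ j, 0 ≤ mu j)
    (heq : ∑ i, l i • xv i = -∑ j, mu j • yv j)
    (hunit : ‖∑ i, l i • xv i‖ = 1) :
    ∑ i, l i • xv i = y - x ∧ ‖x - y‖ = 1 := by
  set u := ∑ i, l i • xv i
  set L := ∑ i, l i
  set M := ∑ j, mu j
  have hL : 1 ≤ L := hunit ▸ norm_sum_smul_le_sum hl fun i => (hxv i).le
  have hM : 1 ≤ M := by
    have := norm_sum_smul_le_sum hmu fun j => (hyv j).le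
    rwa [← neg_neg (∑ j, mu j • yv j), ← heq, norm_neg, hunit] at this
  have hsum : ∑ i, ∑ j, l i * mu j * ‖(x - y) + xv i - yv j‖ ^ 2 ≤ L * M := by
    rw [Finset.sum_mul_sum]
    refine Finset.sum_le_sum fun i _ => Finset.sum_le_sum fun j _ => ?_
    have hij : ‖(x - y) + xv i - yv j‖ ^ 2 ≤ 1 := by
      rw [sub_add_eq_add_sub]
      exact pow_le_one₀ (norm_nonneg _) (hb i j)
    exact mul_le_of_le_one_right (mul_nonneg (hl i) (hmu j)) hij
  rw [sum_sum_mul_norm_add_sub_sq hxv hyv heq, hunit] at hsum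
  have hsq := norm_add_sq_real (x - y) u
  rw [hunit, real_inner_comm] at hsq
  have hkey : (L - 1) * (M - 1) * (1 + ‖x - y‖ ^ 2) + (1 - ‖x - y‖ ^ 2)
      + (L + M) * ‖(x - y) + u‖ ^ 2 ≤ 0 := by
    linear_combination hsum + (L + M) * hsq
  have hwu : ‖(x - y) + u‖ ^ 2 = 0 := by
    have h₁ : 0 ≤ (L - 1) * (M - 1) * (1 + ‖x - y‖ ^ 2) :=
      mul_nonneg (mul_nonneg (sub_nonneg.2 hL) (sub_nonneg.2 hM)) (by positivity)
    have h₂ : 0 ≤ 1 - ‖x - y‖ ^ 2 := sub_nonneg.2 (pow_le_one₀ (norm_nonneg _) hdist)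
    nlinarith [sq_nonneg ‖(x - y) + u‖]
  have hu : u = y - x := by
    rw [sq_eq_zero_iff, norm_eq_zero, add_eq_zero_iff_neg_eq'] at hwu
    rw [← neg_neg u, hwu, neg_sub]
  exact ⟨hu, by rw [← neg_sub, norm_neg, ← hu, hunit]⟩

/-- Let `x ≠ y` with `‖x − y‖ ≤ 1`, and let `x₁, …, x_k`, `y₁, …, y_m` be unit vectors
with `‖x + xᵢ − y − y_j‖ ≤ 1` for all `i, j`. If nonnegative combinations satisfy
`∑ λᵢ xᵢ = −∑ μ_j y_j` and this common vector is a unit vector, then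
`∑ λᵢ xᵢ = y − x`; in particular `‖x − y‖ = 1`. -/
theorem cone_meets_antipodal_cone {d k m : ℕ} (x y : EuclideanSpace ℝ (Fin d))
    (hxy : x ≠ y) (hdist : ‖x - y‖ ≤ 1)
    (xv : Fin k → EuclideanSpace ℝ (Fin d)) (yv : Fin m → EuclideanSpace ℝ (Fin d))
    (hxv : ∀ i, ‖xv i‖ = 1) (hyv : ∀ j, ‖yv j‖ = 1)
    (hb : ∀ i, ∀ j, ‖x + xv i - y - yv j‖ ≤ 1)
    (l : Fin k → ℝ) (mu : Fin m → ℝ)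
    (hl : ∀ i, 0 ≤ l i) (hmu : ∀ j, 0 ≤ mu j)
    (heq : ∑ i, l i • xv i = -∑ j, mu j • yv j)
    (hunit : ‖∑ i, l i • xv i‖ = 1) :
    ∑ i, l i • xv i = y - x ∧ ‖x - y‖ = 1 :=
  cone_meets_antipodal_cone_general x y hdist xv yv hxv hyv hb l mu hl hmu heq hunit
end

section
/- Let x₁, …, x_k be unit vectors in ℝ^d with ‖xᵢ − x_j‖ ≤ 1 for all i, j. Then there is no unit vector u such that both u and −u are nonnegative linear combinations of x₁, …, x_k; that is, there are no coefficients λ₁, …, λ_k ≥ 0 and μ₁, …, μ_k ≥ 0 with ∑_i λᵢ xᵢ = u and ∑_i μᵢ xᵢ = −u for some vector u of norm 1. -/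
/-! A diameter bound of 1 forces the unit vectors `xᵢ` to have pairwise nonnegative inner
products, hence any two nonnegative combinations of them have nonnegative inner product;
but `⟪u, -u⟫ = -1`. -/

open scoped InnerProductSpace

section ConeInner

variable {E : Type*} [NormedAddCommGroup E] [InnerProductSpace ℝ E]

theorem real_inner_nonneg_of_norm_sub_sq_le {a b : E} (h : ‖a - b‖ ^ 2 ≤ ‖a‖ ^ 2 + ‖b‖ ^ 2) :
    0 ≤ ⟪a, b⟫_ℝ := by
  rw [norm_sub_sq_real] at h
  linarith

theorem real_inner_sum_smul_sum_smul_nonneg {ι : Type*} [Fintype ι] (x : ι → E)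
    (hx : ∀ i j, 0 ≤ ⟪x i, x j⟫_ℝ) {a b : ι → ℝ} (ha : ∀ i, 0 ≤ a i) (hb : ∀ j, 0 ≤ b j) :
    0 ≤ ⟪∑ i, a i • x i, ∑ j, b j • x j⟫_ℝ := by
  simp only [sum_inner, inner_sum, real_inner_smul_left, real_inner_smul_right]
  exact Finset.sum_nonneg fun j _ => Finset.sum_nonneg fun i _ =>
    mul_nonneg (hb j) (mul_nonneg (ha i) (hx i j))

end ConeInner

/-- If `x₁, …, x_k` are unit vectors in `ℝ^d` with `‖xᵢ − x_j‖ ≤ 1` for all `i, j`, then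
there is no unit vector `u` such that both `u` and `−u` are nonnegative linear
combinations of the `xᵢ`. -/
theorem no_antipodal_unit_in_cone {d k : ℕ}
    (x : Fin k → EuclideanSpace ℝ (Fin d))
    (hx : ∀ i, ‖x i‖ = 1) (hsep : ∀ i j, ‖x i - x j‖ ≤ 1) :
    ¬ ∃ (u : EuclideanSpace ℝ (Fin d)) (l mu : Fin k → ℝ),
      ‖u‖ = 1 ∧ (∀ i, 0 ≤ l i) ∧ (∀ i, 0 ≤ mu i) ∧
      ∑ i, l i • x i = u ∧ ∑ i, mu i • x i = -u := by
  rintro ⟨u, l, mu, hu, hl, hmu, hsum_l, hsum_mu⟩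
  have hpair : ∀ i j, 0 ≤ ⟪x i, x j⟫_ℝ := fun i j =>
    real_inner_nonneg_of_norm_sub_sq_le <| by
      rw [hx i, hx j]
      nlinarith [hsep i j, norm_nonneg (x i - x j)]
  have hcone := real_inner_sum_smul_sum_smul_nonneg x hpair hl hmu
  rw [hsum_l, hsum_mu, inner_neg_right, real_inner_self_eq_norm_sq, hu] at hcone
  norm_num at hcone
end

section
/- Let x₁, …, x_k be unit vectors in ℝ^d (k ≥ 1) with ‖xᵢ − x_j‖ ≤ 1 for all i, j. Then there exists a vector v ∈ ℝ^d with ⟨v, xᵢ⟩ > 0 for every i = 1, …, k; that is, the vectors x₁, …, x_k all lie in a common open half-space, so the corresponding points of the unit sphere lie in a common open hemisphere. -/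
open scoped RealInnerProductSpace

section

variable {E : Type*} [NormedAddCommGroup E] [InnerProductSpace ℝ E]

theorem real_inner_pos_of_norm_sub_sq_lt {x y : E} (h : ‖x - y‖ ^ 2 < ‖x‖ ^ 2 + ‖y‖ ^ 2) :
    0 < ⟪x, y⟫ := by
  rw [norm_sub_sq_real] at h
  linarith

theorem real_inner_sum_pos_of_pairwise_inner_pos {ι : Type*} [Fintype ι] {x : ι → E}
    (h : ∀ i j, 0 < ⟪x i, x j⟫) (j : ι) : 0 < ⟪∑ i, x i, x j⟫ := by
  rw [sum_inner]
  exact Finset.sum_pos (fun i _ => h i j) ⟨j, Finset.mem_univ j⟩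

end

theorem exists_open_hemisphere_general {d k : ℕ}
    (x : Fin k → EuclideanSpace ℝ (Fin d))
    (hx : ∀ i, ‖x i‖ = 1) (hsep : ∀ i j, ‖x i - x j‖ ≤ 1) :
    ∃ v : EuclideanSpace ℝ (Fin d), ∀ i, 0 < ⟪v, x i⟫ := by
  have hpos : ∀ i j, 0 < ⟪x i, x j⟫ := fun i j => by
    apply real_inner_pos_of_norm_sub_sq_lt
    have hsq : ‖x i - x j‖ ^ 2 ≤ 1 := pow_le_one₀ (norm_nonneg _) (hsep i j)
    rw [hx i, hx j]
    linarith
  exact ⟨∑ i, x i, real_inner_sum_pos_of_pairwise_inner_pos hpos⟩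

/-- If `x₁, …, x_k` (`k ≥ 1`) are unit vectors in `ℝ^d` with `‖xᵢ − x_j‖ ≤ 1` for all
`i, j`, then there is a vector `v` with `⟨v, xᵢ⟩ > 0` for every `i`, i.e. the `xᵢ` lie in
a common open half-space (a common open hemisphere of the unit sphere). -/
theorem exists_open_hemisphere {d k : ℕ} (hk : 1 ≤ k)
    (x : Fin k → EuclideanSpace ℝ (Fin d))
    (hx : ∀ i, ‖x i‖ = 1) (hsep : ∀ i j, ‖x i - x j‖ ≤ 1) :
    ∃ v : EuclideanSpace ℝ (Fin d), ∀ i, 0 < ⟪v, x i⟫ :=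
  exists_open_hemisphere_general x hx hsep
end
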